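/- Assume sup_{ℓ≥1} ℓ|a_ℓ| < ∞, ∑_{ℓ≥1} |a_ℓ| < ∞, a₁ > 0, and a_ℓ ≠ a₁ for every ℓ ≥ 2. Then there exist D₁ > 0, D₂ > 0, η > 0 and δ ∈ (0, 2/a₁) such that for every κ ∈ [2/a₁ − δ, 2/a₁ + δ] and every x ∈ ℓ²_w with ‖x‖_w ≤ η solving the stationary Fourier system at κ, one has for every ℓ ≥ 1: (i) |x_ℓ| ≤ (D₁/ℓ)(D₂|x₁|)^ℓ, and (ii) |ℓ(2 − κ a_ℓ) x_ℓ − κ ∑_{j=1}^{ℓ−1} j a_j x_j x_{ℓ−j}| ≤ D₁ (D₂|x₁|)^{ℓ+2}. -/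

import Mathlib

open scoped BigOperators
open Filter Topology Real

noncomputable section

/-- `x` solves the stationary Fourier system at intensity `κ` for coefficients `a`:
for every `ℓ ≥ 1` the tail series converges absolutely (equivalently, is `Summable` in `ℝ`) and
`ℓ(2 − κ a_ℓ) x_ℓ = κ ∑_{j=1}^{ℓ−1} j a_j x_j x_{ℓ−j}
  + κ ∑_{j=ℓ+1}^∞ (j a_j − (j−ℓ) a_{j−ℓ}) x_j x_{j−ℓ}`,
where the infinite sum is indexed by `j = ℓ + k + 1`, `k : ℕ`. -/
def SolvesMV (a : ℕ → ℝ) (κ : ℝ) (x : ℕ → ℝ) : Prop :=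
  ∀ ℓ : ℕ, 1 ≤ ℓ →
    Summable (fun k : ℕ =>
      (((ℓ + k + 1 : ℕ) : ℝ) * a (ℓ + k + 1) - ((k + 1 : ℕ) : ℝ) * a (k + 1))
        * x (ℓ + k + 1) * x (k + 1)) ∧
    (ℓ : ℝ) * (2 - κ * a ℓ) * x ℓ
      = κ * ∑ j ∈ Finset.Ico 1 ℓ, (j : ℝ) * a j * x j * x (ℓ - j)
        + κ * ∑' k : ℕ,
            (((ℓ + k + 1 : ℕ) : ℝ) * a (ℓ + k + 1) - ((k + 1 : ℕ) : ℝ) * a (k + 1))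
              * x (ℓ + k + 1) * x (k + 1)

/-- The squared weighted norm `∑_{ℓ≥1} (1+ℓ²) x_ℓ²`. -/
def wnormSq (x : ℕ → ℝ) : ℝ := ∑' ℓ : ℕ, (1 + ((ℓ + 1 : ℕ) : ℝ) ^ 2) * x (ℓ + 1) ^ 2

/-- The weighted norm `‖x‖_w = (∑_{ℓ≥1} (1+ℓ²) x_ℓ²)^{1/2}`. -/
def wnorm (x : ℕ → ℝ) : ℝ := Real.sqrt (wnormSq x)

/-- Membership in the weighted space `ℓ²_w`. -/
def MemL2w (x : ℕ → ℝ) : Prop :=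
  Summable fun ℓ : ℕ => (1 + ((ℓ + 1 : ℕ) : ℝ) ^ 2) * x (ℓ + 1) ^ 2

/-!
Near `κ₁ = 2 / a₁` every mode `ℓ ≥ 2` has linear coefficient `|2 - κ a_ℓ| ≥ c > 0`, because
`a_ℓ → 0` and `a_ℓ ≠ a₁`. The stationary system then bounds `ℓ |x_ℓ|` by `K` times the two
quadratic convolution sums of `|x|`. Since `ℓ |x_ℓ| ≤ ‖x‖_w` is small, this first gives
`ℓ² |x_ℓ| ≲ ‖x‖_w ‖x‖₁`, hence `‖x‖₁ ≤ 2 |x₁|`. An induction on `n` then shows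
`ℓ |x_ℓ| ≤ B t^(min ℓ n)` with `t = 6 K |x₁|`: in the finite sum both factors of `x_j x_{ℓ-j}`
contribute powers of `t` adding up to `n + 1`, and in the tail the extra power of `t` comes from
`‖x‖₁ ≤ 2 |x₁|`.
-/

lemma hasSum_one_div_natCast_add_two_sq :
    HasSum (fun k : ℕ => 1 / ((k + 2 : ℕ) : ℝ) ^ 2) (π ^ 2 / 6 - 1) := by
  simpa [Finset.sum_range_succ] using (hasSum_nat_add_iff' 2).2 hasSum_zeta_two

lemma tsum_one_div_natCast_add_two_sq_le_one :
    ∑' k : ℕ, 1 / ((k + 2 : ℕ) : ℝ) ^ 2 ≤ 1 := by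
  rw [hasSum_one_div_natCast_add_two_sq.tsum_eq]
  nlinarith [Real.pi_pos, Real.pi_lt_d2]

namespace Convolution

variable {y : ℕ → ℝ} {K η : ℝ}

def lowConv (y : ℕ → ℝ) (m : ℕ) : ℝ := ∑ j ∈ Finset.Ico 1 m, y j * y (m - j)

/-- `∑_{j > m} y_j y_{j-m}`, reindexed by `j = m + k + 1` as in `SolvesMV`. -/
def tailConv (y : ℕ → ℝ) (m : ℕ) : ℝ := ∑' k : ℕ, y (m + k + 1) * y (k + 1)

lemma le_tsum_succ (hy : ∀ n, 0 ≤ y n) (hs : Summable fun k => y (k + 1)) {m : ℕ}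
    (hm : 1 ≤ m) : y m ≤ ∑' k, y (k + 1) := by
  obtain ⟨k, rfl⟩ := Nat.exists_eq_add_of_le' hm
  exact hs.le_tsum k fun j _ => hy _

lemma sum_Ico_one_le_tsum (hy : ∀ n, 0 ≤ y n) (hs : Summable fun k => y (k + 1)) (m : ℕ) :
    ∑ j ∈ Finset.Ico 1 m, y j ≤ ∑' k, y (k + 1) := by
  rw [Finset.sum_Ico_eq_sum_range]
  simp_rw [add_comm 1]
  exact hs.sum_le_tsum _ fun j _ => hy _

lemma summable_tailConv (hy : ∀ n, 0 ≤ y n) (hs : Summable fun k => y (k + 1)) (m : ℕ) :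
    Summable fun k => y (m + k + 1) * y (k + 1) :=
  (hs.mul_left (∑' k, y (k + 1))).of_nonneg_of_le (fun k => mul_nonneg (hy _) (hy _))
    fun k => mul_le_mul_of_nonneg_right (le_tsum_succ hy hs (by omega)) (hy _)

lemma tailConv_le (hy : ∀ n, 0 ≤ y n) (hs : Summable fun k => y (k + 1)) {m : ℕ} {M : ℝ}
    (hM : ∀ k, y (m + k + 1) ≤ M) : tailConv y m ≤ M * ∑' k, y (k + 1) := by
  rw [tailConv, ← tsum_mul_left]
  exact (summable_tailConv hy hs m).tsum_le_tsum
    (fun k => mul_le_mul_of_nonneg_right (hM k) (hy _)) (hs.mul_left M)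

lemma natCast_mul_lowConv_le (hy : ∀ n, 0 ≤ y n) (hs : Summable fun k => y (k + 1))
    (hη : ∀ n, 1 ≤ n → n * y n ≤ η) (m : ℕ) :
    m * lowConv y m ≤ 4 * η * ∑' k, y (k + 1) := by
  have hη0 : 0 ≤ η := (mul_nonneg (Nat.cast_nonneg 1) (hy 1)).trans (hη 1 le_rfl)
  -- one of the two factors has index at least `m / 2`
  have hterm : ∀ j ∈ Finset.Ico 1 m, m * (y j * y (m - j)) ≤ 2 * η * (y j + y (m - j)) := by
    intro j hj
    obtain ⟨hj1, hjm⟩ := Finset.mem_Ico.1 hj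
    have hcast : (j : ℝ) + ((m - j : ℕ) : ℝ) = m := by exact_mod_cast Nat.add_sub_cancel' hjm.le
    have hmj := hy (m - j)
    have hj := hy j
    have hsmall : m * y j ≤ 2 * η ∨ m * y (m - j) ≤ 2 * η := by
      rcases le_total (m - j) j with hle | hle
      · have : ((m - j : ℕ) : ℝ) ≤ j := by exact_mod_cast hle
        left; nlinarith [hη j hj1]
      · have : (j : ℝ) ≤ ((m - j : ℕ) : ℝ) := by exact_mod_cast hle
        right; nlinarith [hη (m - j) (by omega)]
    rcases hsmall with h | h
    · nlinarith [mul_le_mul_of_nonneg_right h hmj, mul_nonneg hη0 hj]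
    · nlinarith [mul_le_mul_of_nonneg_right h hj, mul_nonneg hη0 hmj]
  have hreflect : ∑ j ∈ Finset.Ico 1 m, y (m - j) = ∑ j ∈ Finset.Ico 1 m, y j := by
    rw [Finset.sum_Ico_reflect _ _ (Nat.le_succ m), Nat.add_sub_cancel_left, Nat.add_sub_cancel]
  calc m * lowConv y m = ∑ j ∈ Finset.Ico 1 m, m * (y j * y (m - j)) := by
        rw [lowConv, Finset.mul_sum]
    _ ≤ ∑ j ∈ Finset.Ico 1 m, 2 * η * (y j + y (m - j)) := Finset.sum_le_sum hterm
    _ = 2 * η * (2 * ∑ j ∈ Finset.Ico 1 m, y j) := by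
        rw [← Finset.mul_sum, Finset.sum_add_distrib, hreflect]; ring
    _ ≤ 4 * η * ∑' k, y (k + 1) := by
        have := sum_Ico_one_le_tsum hy hs m
        nlinarith

lemma le_natCast_mul (hy : ∀ n, 0 ≤ y n) {m : ℕ} (hm : 1 ≤ m) : y m ≤ m * y m :=
  le_mul_of_one_le_left (hy m) (by exact_mod_cast hm)

lemma natCast_mul_tailConv_le (hy : ∀ n, 0 ≤ y n) (hs : Summable fun k => y (k + 1))
    (hη : ∀ n, 1 ≤ n → n * y n ≤ η) {m : ℕ} (hm : 1 ≤ m) :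
    m * tailConv y m ≤ η * ∑' k, y (k + 1) := by
  have hm0 : (0 : ℝ) < m := by exact_mod_cast hm
  have hM : ∀ k, y (m + k + 1) ≤ η / m := fun k => by
    rw [le_div_iff₀ hm0, mul_comm]
    refine le_trans ?_ (hη (m + k + 1) (by omega))
    have hcast : (m : ℝ) ≤ ((m + k + 1 : ℕ) : ℝ) := by exact_mod_cast (by omega : m ≤ m + k + 1)
    exact mul_le_mul_of_nonneg_right hcast (hy _)
  calc m * tailConv y m ≤ m * (η / m * ∑' k, y (k + 1)) :=
        mul_le_mul_of_nonneg_left (tailConv_le hy hs hM) hm0.le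
    _ = η * ∑' k, y (k + 1) := by field_simp

lemma lowConv_le_of_mul_mul_le {m : ℕ} {A : ℝ} (hA : 0 ≤ A)
    (h : ∀ j ∈ Finset.Ico 1 m, (j * y j) * ((m - j : ℕ) * y (m - j)) ≤ A) :
    lowConv y m ≤ 2 * A := by
  rcases Nat.eq_zero_or_pos m with rfl | hm
  · simp [lowConv, hA]
  have hm0 : (0 : ℝ) < m := by exact_mod_cast hm
  have hterm : ∀ j ∈ Finset.Ico 1 m, y j * y (m - j) ≤ 2 * A / m := by
    intro j hj
    obtain ⟨hj1, hjm⟩ := Finset.mem_Ico.1 hj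
    have hu : (1 : ℝ) ≤ j := by exact_mod_cast hj1
    have hv : (1 : ℝ) ≤ ((m - j : ℕ) : ℝ) := by exact_mod_cast (by omega : 1 ≤ m - j)
    have hsum : (j : ℝ) + ((m - j : ℕ) : ℝ) = m := by exact_mod_cast Nat.add_sub_cancel' hjm.le
    -- `2 j (m - j) ≥ m` because both factors are at least one
    have hprod : (m : ℝ) ≤ 2 * (j * ((m - j : ℕ) : ℝ)) := by nlinarith
    rw [le_div_iff₀ hm0]
    nlinarith [h j hj]
  calc lowConv y m ≤ (Finset.Ico 1 m).card • (2 * A / m) := Finset.sum_le_card_nsmul _ _ _ hterm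
    _ = ((m - 1 : ℕ) : ℝ) * (2 * A / m) := by rw [Nat.card_Ico, nsmul_eq_mul]
    _ ≤ m * (2 * A / m) := by gcongr; exact_mod_cast Nat.sub_le m 1
    _ = 2 * A := by field_simp

lemma tailConv_le_of_le_pow (hy : ∀ n, 0 ≤ y n) (hs : Summable fun k => y (k + 1)) {B t : ℝ}
    (hB : 0 ≤ B) (ht : 0 ≤ t) (hS : ∑' k, y (k + 1) ≤ B * t) {m p : ℕ}
    (hM : ∀ k, y (m + k + 1) ≤ B * t ^ p) : tailConv y m ≤ B ^ 2 * t ^ (p + 1) :=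
  calc tailConv y m ≤ B * t ^ p * ∑' k, y (k + 1) := tailConv_le hy hs hM
    _ ≤ B * t ^ p * (B * t) := by gcongr
    _ = B ^ 2 * t ^ (p + 1) := by ring

lemma tsum_le_two_mul_of_sq_mul_le (hy : ∀ n, 0 ≤ y n) (hs : Summable fun k => y (k + 1))
    (h : ∀ m : ℕ, 2 ≤ m → (m : ℝ) ^ 2 * y m ≤ (∑' k, y (k + 1)) / 2) :
    ∑' k, y (k + 1) ≤ 2 * y 1 := by
  set S := ∑' k, y (k + 1)
  have hS : 0 ≤ S := tsum_nonneg fun k => hy _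
  have hsplit : S = y 1 + ∑' k, y (k + 2) := hs.tsum_eq_zero_add
  have hterm : ∀ k, y (k + 2) ≤ S / 2 * (1 / ((k + 2 : ℕ) : ℝ) ^ 2) := fun k => by
    rw [mul_one_div, le_div_iff₀ (by positivity), mul_comm]
    exact h (k + 2) (by omega)
  have htail : ∑' k, y (k + 2) ≤ S / 2 :=
    calc ∑' k, y (k + 2) ≤ ∑' k : ℕ, S / 2 * (1 / ((k + 2 : ℕ) : ℝ) ^ 2) :=
          ((summable_nat_add_iff 1).2 hs).tsum_le_tsum hterm
            (hasSum_one_div_natCast_add_two_sq.summable.mul_left _)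
      _ ≤ S / 2 * 1 := by
          rw [tsum_mul_left]
          exact mul_le_mul_of_nonneg_left tsum_one_div_natCast_add_two_sq_le_one (by positivity)
      _ = S / 2 := mul_one _
  linarith

/-- The form in which the stationary system controls `|x|` once the linear coefficients
`2 - κ a_ℓ`, `ℓ ≥ 2`, are bounded away from zero. -/
def IsConvDominated (K : ℝ) (y : ℕ → ℝ) : Prop :=
  ∀ m : ℕ, 2 ≤ m → m * y m ≤ K * (lowConv y m + tailConv y m)

lemma IsConvDominated.sq_mul_le (hdom : IsConvDominated K y) (hK : 0 ≤ K) (hy : ∀ n, 0 ≤ y n)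
    (hs : Summable fun k => y (k + 1)) (hη : ∀ n, 1 ≤ n → n * y n ≤ η) {m : ℕ} (hm : 2 ≤ m) :
    (m : ℝ) ^ 2 * y m ≤ 5 * K * η * ∑' k, y (k + 1) :=
  calc (m : ℝ) ^ 2 * y m = m * (m * y m) := by ring
    _ ≤ m * (K * (lowConv y m + tailConv y m)) :=
        mul_le_mul_of_nonneg_left (hdom m hm) (by positivity)
    _ = K * (m * lowConv y m + m * tailConv y m) := by ring
    _ ≤ K * (4 * η * ∑' k, y (k + 1) + η * ∑' k, y (k + 1)) :=
        mul_le_mul_of_nonneg_left (add_le_add (natCast_mul_lowConv_le hy hs hη m)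
          (natCast_mul_tailConv_le hy hs hη (by omega))) hK
    _ = 5 * K * η * ∑' k, y (k + 1) := by ring

lemma IsConvDominated.natCast_mul_le_pow_min_succ (hdom : IsConvDominated K y) (hK : 0 ≤ K)
    (hy : ∀ n, 0 ≤ y n) (hs : Summable fun k => y (k + 1)) {B t : ℝ} (hB : 0 ≤ B) (ht₀ : 0 ≤ t)
    (ht₁ : t ≤ 1) (hS : ∑' k, y (k + 1) ≤ B * t) (hKB : 3 * K * B ≤ 1) {n : ℕ} (hn : 1 ≤ n)
    (hP : ∀ m, 1 ≤ m → m * y m ≤ B * t ^ min m n) {m : ℕ} (hm : 1 ≤ m) :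
    m * y m ≤ B * t ^ min m (n + 1) := by
  rcases le_or_gt m n with hmn | hnm
  · simpa [min_eq_left hmn, min_eq_left (show m ≤ n + 1 by omega)] using hP m hm
  rw [min_eq_right hnm]
  have hlow : lowConv y m ≤ 2 * (B ^ 2 * t ^ (n + 1)) := by
    refine lowConv_le_of_mul_mul_le (by positivity) fun j hj => ?_
    obtain ⟨hj1, hjm⟩ := Finset.mem_Ico.1 hj
    calc (j * y j) * ((m - j : ℕ) * y (m - j))
        ≤ (B * t ^ min j n) * (B * t ^ min (m - j) n) :=
          mul_le_mul (hP j hj1) (hP (m - j) (by omega)) (mul_nonneg (by positivity) (hy _))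
            (by positivity)
      _ = B ^ 2 * t ^ (min j n + min (m - j) n) := by ring
      _ ≤ B ^ 2 * t ^ (n + 1) :=
          mul_le_mul_of_nonneg_left (pow_le_pow_of_le_one ht₀ ht₁ (by omega)) (sq_nonneg B)
  have htail : tailConv y m ≤ B ^ 2 * t ^ (n + 1) := by
    refine tailConv_le_of_le_pow hy hs hB ht₀ hS fun k => ?_
    refine (le_natCast_mul hy (by omega)).trans ((hP (m + k + 1) (by omega)).trans_eq ?_)
    rw [min_eq_right (show n ≤ m + k + 1 by omega)]
  calc m * y m ≤ K * (lowConv y m + tailConv y m) := hdom m (by omega)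
    _ ≤ K * (2 * (B ^ 2 * t ^ (n + 1)) + B ^ 2 * t ^ (n + 1)) := by gcongr
    _ = 3 * K * B * (B * t ^ (n + 1)) := by ring
    _ ≤ B * t ^ (n + 1) := mul_le_of_le_one_left (by positivity) hKB

theorem IsConvDominated.geometric_bounds (hdom : IsConvDominated K y) (hK : 0 < K)
    (hy : ∀ n, 0 ≤ y n) (hs : Summable fun k => y (k + 1)) (hη : ∀ n, 1 ≤ n → n * y n ≤ η)
    (hKη : 10 * K * η ≤ 1) {m : ℕ} (hm : 1 ≤ m) :
    m * y m ≤ (3 * K)⁻¹ * (6 * K * y 1) ^ m ∧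
      tailConv y m ≤ ((3 * K)⁻¹) ^ 2 * (6 * K * y 1) ^ (m + 2) := by
  set S := ∑' k, y (k + 1)
  set B := (3 * K)⁻¹
  set t := 6 * K * y 1
  have hB : 0 ≤ B := by positivity
  have ht₀ : 0 ≤ t := mul_nonneg (by positivity) (hy 1)
  have hy₁ : y 1 ≤ η := by simpa using hη 1 le_rfl
  have ht₁ : t ≤ 1 := by nlinarith
  have hBt : B * t = 2 * y 1 := by simp only [B, t]; field_simp; ring
  have hsq : ∀ m : ℕ, 2 ≤ m → (m : ℝ) ^ 2 * y m ≤ S / 2 := fun m hm =>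
    (hdom.sq_mul_le hK.le hy hs hη hm).trans
      (by nlinarith [(tsum_nonneg fun k => hy (k + 1) : 0 ≤ S)])
  have hS : S ≤ B * t := hBt ▸ tsum_le_two_mul_of_sq_mul_le hy hs hsq
  have hbase : ∀ m : ℕ, 1 ≤ m → m * y m ≤ B * t ^ min m 1 := fun m hm => by
    rw [min_eq_right hm, pow_one, hBt]
    rcases eq_or_lt_of_le hm with rfl | hm2
    · rw [Nat.cast_one, one_mul]
      linarith [hy 1]
    · have := hsq m hm2
      have := le_tsum_succ hy hs (m := 1) le_rfl
      have hm1 : (1 : ℝ) ≤ m := by exact_mod_cast hm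
      nlinarith [hy m]
  have hgeo : ∀ m : ℕ, 1 ≤ m → m * y m ≤ B * t ^ m := by
    have hall : ∀ n : ℕ, 1 ≤ n → ∀ m : ℕ, 1 ≤ m → m * y m ≤ B * t ^ min m n :=
      Nat.le_induction hbase fun n hn ih m hm =>
        hdom.natCast_mul_le_pow_min_succ hK.le hy hs hB ht₀ ht₁ hS
          (mul_inv_cancel₀ (by positivity)).le hn ih hm
    exact fun m hm => by simpa using hall m hm m hm
  refine ⟨hgeo m hm, tailConv_le_of_le_pow hy hs hB ht₀ hS fun k => ?_⟩
  calc y (m + k + 1) ≤ (m + k + 1 : ℕ) * y (m + k + 1) := le_natCast_mul hy (by omega)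
    _ ≤ B * t ^ (m + k + 1) := hgeo _ (by omega)
    _ ≤ B * t ^ (m + 1) :=
        mul_le_mul_of_nonneg_left (pow_le_pow_of_le_one ht₀ ht₁ (by omega)) hB

end Convolution

open Convolution

section WeightedSpace

variable {x : ℕ → ℝ}

lemma natCast_mul_abs_le_wnorm (hx : MemL2w x) {m : ℕ} (hm : 1 ≤ m) : m * |x m| ≤ wnorm x := by
  obtain ⟨k, rfl⟩ := Nat.exists_eq_add_of_le' hm
  have h0 : 0 ≤ wnormSq x := tsum_nonneg fun j => by positivity
  rw [wnorm, Real.le_sqrt (by positivity) h0]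
  calc ((k + 1 : ℕ) * |x (k + 1)|) ^ 2 = ((k + 1 : ℕ) : ℝ) ^ 2 * x (k + 1) ^ 2 := by
        rw [mul_pow, sq_abs]
    _ ≤ (1 + ((k + 1 : ℕ) : ℝ) ^ 2) * x (k + 1) ^ 2 := by nlinarith [sq_nonneg (x (k + 1))]
    _ ≤ wnormSq x := hx.le_tsum k fun j _ => by positivity

lemma summable_abs_of_memL2w (hx : MemL2w x) : Summable fun k => |x (k + 1)| := by
  have hinv : Summable fun k : ℕ => 1 / ((k + 1 : ℕ) : ℝ) ^ 2 :=
    (summable_nat_add_iff 1).2 (Real.summable_one_div_nat_pow.2 one_lt_two)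
  refine (hx.add hinv).of_nonneg_of_le (fun k => abs_nonneg _) fun k => ?_
  set n : ℝ := ((k + 1 : ℕ) : ℝ)
  have hn : 0 < n := by positivity
  -- AM-GM for `n ^ 2 |x|` and `1`
  have hamgm : n ^ 2 * |x (k + 1)| ≤ n ^ 2 * (n ^ 2 * x (k + 1) ^ 2 + 1 / n ^ 2) := by
    rw [mul_add, mul_one_div_cancel (by positivity), ← sq_abs (x (k + 1))]
    nlinarith [sq_nonneg (n ^ 2 * |x (k + 1)| - 1), abs_nonneg (x (k + 1))]
  have := le_of_mul_le_mul_left hamgm (by positivity)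
  nlinarith [sq_nonneg (x (k + 1))]

end WeightedSpace

section SpectralGap

variable {a : ℕ → ℝ} {C : ℝ}

lemma tendsto_zero_of_natCast_mul_abs_le (hC : ∀ ℓ : ℕ, 1 ≤ ℓ → (ℓ : ℝ) * |a ℓ| ≤ C) :
    Tendsto a atTop (𝓝 0) := by
  refine squeeze_zero_norm' (eventually_atTop.2 ⟨1, fun ℓ hℓ => ?_⟩)
    (tendsto_const_div_atTop_nhds_zero_nat C)
  rw [Real.norm_eq_abs, le_div_iff₀ (by exact_mod_cast hℓ), mul_comm]
  exact hC ℓ hℓ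

lemma exists_pos_forall_le_of_eventually_le {f : ℕ → ℝ} {n₀ : ℕ} {r : ℝ} (hr : 0 < r)
    (hf : ∀ n, n₀ ≤ n → 0 < f n) (hev : ∀ᶠ n in atTop, r ≤ f n) :
    ∃ c > 0, ∀ n, n₀ ≤ n → c ≤ f n := by
  obtain ⟨N, hN⟩ := eventually_atTop.1 hev
  have hfin : ∀ᶠ c in 𝓝 (0 : ℝ), c ≤ r ∧ ∀ n ∈ Finset.Ico n₀ N, c ≤ f n :=
    (ge_mem_nhds hr).and <| (Finset.eventually_all _).2 fun n hn =>
      ge_mem_nhds (hf n (Finset.mem_Ico.1 hn).1)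
  have hpos : ∀ᶠ c in 𝓝[>] (0 : ℝ), 0 < c := self_mem_nhdsWithin
  obtain ⟨c, ⟨hcr, hcf⟩, hc⟩ := ((hfin.filter_mono nhdsWithin_le_nhds).and hpos).exists
  refine ⟨c, hc, fun n hn => ?_⟩
  rcases lt_or_ge n N with hnN | hNn
  · exact hcf n (Finset.mem_Ico.2 ⟨hn, hnN⟩)
  · exact hcr.trans (hN n hNn)

lemma exists_pos_le_abs_two_sub_mul (hC : ∀ ℓ : ℕ, 1 ≤ ℓ → (ℓ : ℝ) * |a ℓ| ≤ C)
    (h1 : 0 < a 1) (hne : ∀ ℓ : ℕ, 2 ≤ ℓ → a ℓ ≠ a 1) :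
    ∃ c > 0, ∀ ℓ : ℕ, 2 ≤ ℓ → c ≤ |2 - 2 / a 1 * a ℓ| := by
  refine exists_pos_forall_le_of_eventually_le one_pos (fun ℓ hℓ => abs_pos.2 fun h => ?_) ?_
  · refine hne ℓ hℓ ?_
    field_simp at h
    linarith
  · have := (((tendsto_zero_of_natCast_mul_abs_le hC).const_mul (2 / a 1)).const_sub 2).abs
    rw [mul_zero, sub_zero, abs_two] at this
    exact this.eventually_const_le one_lt_two

lemma exists_spectral_gap (hC : ∀ ℓ : ℕ, 1 ≤ ℓ → (ℓ : ℝ) * |a ℓ| ≤ C) (h1 : 0 < a 1)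
    (hne : ∀ ℓ : ℕ, 2 ≤ ℓ → a ℓ ≠ a 1) :
    ∃ c > 0, ∃ δ > 0, δ ≤ 1 / a 1 ∧
      ∀ κ : ℝ, |κ - 2 / a 1| ≤ δ → ∀ ℓ : ℕ, 2 ≤ ℓ → c ≤ |2 - κ * a ℓ| := by
  obtain ⟨c₀, hc₀, hgap⟩ := exists_pos_le_abs_two_sub_mul hC h1 hne
  have habs : ∀ ℓ : ℕ, 1 ≤ ℓ → |a ℓ| ≤ C := fun ℓ hℓ =>
    (le_mul_of_one_le_left (abs_nonneg _) (by exact_mod_cast hℓ)).trans (hC ℓ hℓ)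
  have hC0 : 0 < C := (abs_pos.2 h1.ne').trans_le (habs 1 le_rfl)
  refine ⟨c₀ / 2, by positivity, min (1 / a 1) (c₀ / (2 * C)), by positivity, min_le_left _ _,
    fun κ hκ ℓ hℓ => ?_⟩
  have hpert : |κ - 2 / a 1| * |a ℓ| ≤ c₀ / 2 :=
    calc |κ - 2 / a 1| * |a ℓ| ≤ c₀ / (2 * C) * C :=
          mul_le_mul (hκ.trans (min_le_right _ _)) (habs ℓ (by omega)) (abs_nonneg _)
            (by positivity)
      _ = c₀ / 2 := by field_simp
  have hdiff := abs_sub_abs_le_abs_sub (2 - 2 / a 1 * a ℓ) (2 - κ * a ℓ)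
  rw [show 2 - 2 / a 1 * a ℓ - (2 - κ * a ℓ) = (κ - 2 / a 1) * a ℓ by ring, abs_mul] at hdiff
  linarith [hgap ℓ hℓ]

end SpectralGap

section StationarySystem

variable {a x : ℕ → ℝ} {C κ : ℝ}

lemma abs_sum_le_lowConv (hC : ∀ ℓ : ℕ, 1 ≤ ℓ → (ℓ : ℝ) * |a ℓ| ≤ C) (ℓ : ℕ) :
    |∑ j ∈ Finset.Ico 1 ℓ, (j : ℝ) * a j * x j * x (ℓ - j)|
      ≤ C * lowConv (fun n => |x n|) ℓ := by
  refine (Finset.abs_sum_le_sum_abs _ _).trans ?_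
  rw [lowConv, Finset.mul_sum]
  refine Finset.sum_le_sum fun j hj => ?_
  rw [abs_mul, abs_mul, abs_mul, Nat.abs_cast, mul_assoc]
  exact mul_le_mul_of_nonneg_right (hC j (Finset.mem_Ico.1 hj).1) (by positivity)

lemma abs_tsum_le_tailConv (hC : ∀ ℓ : ℕ, 1 ≤ ℓ → (ℓ : ℝ) * |a ℓ| ≤ C)
    (hxs : Summable fun k => |x (k + 1)|) (ℓ : ℕ) :
    |∑' k : ℕ, (((ℓ + k + 1 : ℕ) : ℝ) * a (ℓ + k + 1) - ((k + 1 : ℕ) : ℝ) * a (k + 1))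
        * x (ℓ + k + 1) * x (k + 1)|
      ≤ 2 * C * tailConv (fun n => |x n|) ℓ := by
  have hcoef : ∀ n : ℕ, 1 ≤ n → |(n : ℝ) * a n| ≤ C := fun n hn => by
    rw [abs_mul, Nat.abs_cast]; exact hC n hn
  rw [← Real.norm_eq_abs]
  refine tsum_of_norm_bounded
    ((summable_tailConv (fun n => abs_nonneg (x n)) hxs ℓ).hasSum.mul_left (2 * C)) fun k => ?_
  rw [Real.norm_eq_abs, abs_mul, abs_mul, mul_assoc]
  refine mul_le_mul_of_nonneg_right ((abs_sub _ _).trans ?_) (by positivity)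
  linarith [hcoef (ℓ + k + 1) (by omega), hcoef (k + 1) (by omega)]

lemma SolvesMV.abs_sub_le (hsol : SolvesMV a κ x) (hκ : 0 ≤ κ)
    (hC : ∀ ℓ : ℕ, 1 ≤ ℓ → (ℓ : ℝ) * |a ℓ| ≤ C) (hxs : Summable fun k => |x (k + 1)|)
    {ℓ : ℕ} (hℓ : 1 ≤ ℓ) :
    |(ℓ : ℝ) * (2 - κ * a ℓ) * x ℓ - κ * ∑ j ∈ Finset.Ico 1 ℓ, (j : ℝ) * a j * x j * x (ℓ - j)|
      ≤ κ * (2 * C * tailConv (fun n => |x n|) ℓ) := by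
  rw [(hsol ℓ hℓ).2, add_sub_cancel_left, abs_mul, abs_of_nonneg hκ]
  exact mul_le_mul_of_nonneg_left (abs_tsum_le_tailConv hC hxs ℓ) hκ

lemma SolvesMV.isConvDominated (hsol : SolvesMV a κ x) (hκ : 0 ≤ κ)
    (hC : ∀ ℓ : ℕ, 1 ≤ ℓ → (ℓ : ℝ) * |a ℓ| ≤ C) (hxs : Summable fun k => |x (k + 1)|)
    {c K : ℝ} (hc : 0 < c) (hK : 2 * κ * C ≤ c * K)
    (hgap : ∀ ℓ : ℕ, 2 ≤ ℓ → c ≤ |2 - κ * a ℓ|) :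
    IsConvDominated K fun n => |x n| := by
  intro m hm
  set L := lowConv (fun n => |x n|) m
  set T := tailConv (fun n => |x n|) m
  have hC0 : 0 ≤ C := (abs_nonneg (a 1)).trans (by simpa using hC 1 le_rfl)
  have hL : 0 ≤ L := Finset.sum_nonneg fun j _ => by positivity
  have hT : 0 ≤ T := tsum_nonneg fun k => by positivity
  have hlin : c * (m * |x m|) ≤ |(m : ℝ) * (2 - κ * a m) * x m| := by
    calc c * (m * |x m|) ≤ |2 - κ * a m| * (m * |x m|) :=
          mul_le_mul_of_nonneg_right (hgap m hm) (by positivity)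
      _ = |(m : ℝ) * (2 - κ * a m) * x m| := by rw [abs_mul, abs_mul, Nat.abs_cast]; ring
  have hsplit := abs_sub_abs_le_abs_sub ((m : ℝ) * (2 - κ * a m) * x m)
    (κ * ∑ j ∈ Finset.Ico 1 m, (j : ℝ) * a j * x j * x (m - j))
  have hquad : |κ * ∑ j ∈ Finset.Ico 1 m, (j : ℝ) * a j * x j * x (m - j)| ≤ κ * (C * L) := by
    rw [abs_mul, abs_of_nonneg hκ]
    exact mul_le_mul_of_nonneg_left (abs_sum_le_lowConv hC m) hκ
  have htail := hsol.abs_sub_le hκ hC hxs (by omega : 1 ≤ m)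
  refine le_of_mul_le_mul_left ?_ hc
  calc c * (m * |x m|) ≤ κ * (C * L) + κ * (2 * C * T) := by linarith
    _ ≤ 2 * κ * C * (L + T) := by nlinarith [mul_nonneg (mul_nonneg hκ hC0) hL]
    _ ≤ c * K * (L + T) := by gcongr
    _ = c * (K * (L + T)) := by ring

theorem SolvesMV.geometric_decay (hsol : SolvesMV a κ x) (hκ : 0 ≤ κ)
    (hC : ∀ ℓ : ℕ, 1 ≤ ℓ → (ℓ : ℝ) * |a ℓ| ≤ C) (hx : MemL2w x) {c K : ℝ} (hc : 0 < c)
    (hK : 0 < K) (hκK : 2 * κ * C ≤ c * K) (hgap : ∀ ℓ : ℕ, 2 ≤ ℓ → c ≤ |2 - κ * a ℓ|)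
    (hxη : wnorm x ≤ (10 * K)⁻¹) {ℓ : ℕ} (hℓ : 1 ≤ ℓ) :
    ℓ * |x ℓ| ≤ (3 * K)⁻¹ * (6 * K * |x 1|) ^ ℓ ∧
      |(ℓ : ℝ) * (2 - κ * a ℓ) * x ℓ - κ * ∑ j ∈ Finset.Ico 1 ℓ, (j : ℝ) * a j * x j * x (ℓ - j)|
        ≤ c * K * ((3 * K)⁻¹ ^ 2 * (6 * K * |x 1|) ^ (ℓ + 2)) := by
  have hxs := summable_abs_of_memL2w hx
  have hdom : IsConvDominated K fun n => |x n| := hsol.isConvDominated hκ hC hxs hc hκK hgap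
  obtain ⟨hgeo, htail⟩ := hdom.geometric_bounds hK (fun n => abs_nonneg (x n)) hxs
    (fun n hn => (natCast_mul_abs_le_wnorm hx hn).trans hxη) (mul_inv_cancel₀ (by positivity)).le hℓ
  refine ⟨hgeo, (hsol.abs_sub_le hκ hC hxs hℓ).trans ?_⟩
  calc κ * (2 * C * tailConv (fun n => |x n|) ℓ) = 2 * κ * C * tailConv (fun n => |x n|) ℓ := by
        ring
    _ ≤ c * K * ((3 * K)⁻¹ ^ 2 * (6 * K * |x 1|) ^ (ℓ + 2)) :=
        mul_le_mul hκK htail (tsum_nonneg fun k => by positivity) (by positivity)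

end StationarySystem

theorem geometric_decay_estimates_general
    (a : ℕ → ℝ) (hA : ∃ C : ℝ, ∀ ℓ : ℕ, 1 ≤ ℓ → (ℓ : ℝ) * |a ℓ| ≤ C)
    (h1 : 0 < a 1) (hne : ∀ ℓ : ℕ, 2 ≤ ℓ → a ℓ ≠ a 1) :
    ∃ D₁ : ℝ, 0 < D₁ ∧ ∃ D₂ : ℝ, 0 < D₂ ∧ ∃ η : ℝ, 0 < η ∧
      ∃ δ : ℝ, 0 < δ ∧ δ < 2 / a 1 ∧
      ∀ κ : ℝ, 2 / a 1 - δ ≤ κ → κ ≤ 2 / a 1 + δ →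
        ∀ x : ℕ → ℝ, MemL2w x → wnorm x ≤ η → SolvesMV a κ x →
          ∀ ℓ : ℕ, 1 ≤ ℓ →
            |x ℓ| ≤ (D₁ / (ℓ : ℝ)) * (D₂ * |x 1|) ^ ℓ ∧
            |(ℓ : ℝ) * (2 - κ * a ℓ) * x ℓ
                - κ * ∑ j ∈ Finset.Ico 1 ℓ, (j : ℝ) * a j * x j * x (ℓ - j)|
              ≤ D₁ * (D₂ * |x 1|) ^ (ℓ + 2) := by
  obtain ⟨C, hC⟩ := hA
  obtain ⟨c, hc, δ, hδ, hδa, hgap⟩ := exists_spectral_gap hC h1 hne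
  have hC0 : 0 < C := h1.trans_le (by simpa [abs_of_pos h1] using hC 1 le_rfl)
  -- `κ ≤ 3 / a₁` on the whole window, so `2 κ C ≤ c K`
  set K := 6 * C / (c * a 1)
  have hK : 0 < K := by positivity
  set B := (3 * K)⁻¹
  refine ⟨B + c * K * B ^ 2, by positivity, 6 * K, by positivity, (10 * K)⁻¹, by positivity,
    δ, hδ, hδa.trans_lt (by gcongr; norm_num), fun κ hκl hκr x hx hxη hsol ℓ hℓ => ?_⟩
  have hκ0 : 0 ≤ κ := by linarith [show 1 / a 1 + 1 / a 1 = 2 / a 1 by ring]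
  have hκK : 2 * κ * C ≤ c * K :=
    calc 2 * κ * C ≤ 2 * (3 / a 1) * C := by
          gcongr; linarith [show 2 / a 1 + 1 / a 1 = 3 / a 1 by ring]
      _ = c * K := by simp only [K]; field_simp; ring
  have hδκ : |κ - 2 / a 1| ≤ δ := abs_sub_le_iff.2 ⟨by linarith, by linarith⟩
  obtain ⟨hgeo, hres⟩ := hsol.geometric_decay hκ0 hC hx hc hK hκK (hgap κ hδκ) hxη hℓ
  have hB : 0 ≤ B := by positivity
  constructor
  · rw [div_mul_eq_mul_div, le_div_iff₀ (by exact_mod_cast hℓ), mul_comm]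
    exact hgeo.trans (by gcongr; linarith [(by positivity : 0 ≤ c * K * B ^ 2)])
  · calc _ ≤ c * K * (B ^ 2 * (6 * K * |x 1|) ^ (ℓ + 2)) := hres
      _ = c * K * B ^ 2 * (6 * K * |x 1|) ^ (ℓ + 2) := by ring
      _ ≤ (B + c * K * B ^ 2) * (6 * K * |x 1|) ^ (ℓ + 2) := by gcongr; linarith

/-- geometric-decay estimates for small solutions near `κ₁ = 2/a₁` when
`a₁ > 0` is a simple top mode and `∑|a_ℓ| < ∞`. -/
theorem geometric_decay_estimates
    (a : ℕ → ℝ) (hA : ∃ C : ℝ, ∀ ℓ : ℕ, 1 ≤ ℓ → (ℓ : ℝ) * |a ℓ| ≤ C)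
    (hsum : Summable fun ℓ : ℕ => |a (ℓ + 1)|)
    (h1 : 0 < a 1) (hne : ∀ ℓ : ℕ, 2 ≤ ℓ → a ℓ ≠ a 1) :
    ∃ D₁ : ℝ, 0 < D₁ ∧ ∃ D₂ : ℝ, 0 < D₂ ∧ ∃ η : ℝ, 0 < η ∧
      ∃ δ : ℝ, 0 < δ ∧ δ < 2 / a 1 ∧
      ∀ κ : ℝ, 2 / a 1 - δ ≤ κ → κ ≤ 2 / a 1 + δ →
        ∀ x : ℕ → ℝ, MemL2w x → wnorm x ≤ η → SolvesMV a κ x →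
          ∀ ℓ : ℕ, 1 ≤ ℓ →
            |x ℓ| ≤ (D₁ / (ℓ : ℝ)) * (D₂ * |x 1|) ^ ℓ ∧
            |(ℓ : ℝ) * (2 - κ * a ℓ) * x ℓ
                - κ * ∑ j ∈ Finset.Ico 1 ℓ, (j : ℝ) * a j * x j * x (ℓ - j)|
              ≤ D₁ * (D₂ * |x 1|) ^ (ℓ + 2) :=
  geometric_decay_estimates_general a hA h1 hne
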